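/- arXiv:1812.01167 — 5 statements merged into one kernel-verified Lean document; each statement's English description precedes it below -/
import Mathlib

section
/- Let e₁, e₂, p be real numbers with p ≠ 0. If 2(p²·e₂ - e₁)·cos t + (p²·(e₂² + 1) - (e₁² + 1)) = 0 for all real t, then either e₁ = e₂ = 0, or (p² = e₁/e₂ with e₂ ≠ 0 and (e₂ - e₁)·(e₁·e₂ - 1) = 0). -/
theorem conic_compatibility_eccentricity
    (e₁ e₂ p : ℝ) (hp : p ≠ 0)
    (h : ∀ t : ℝ,
      2 * (p ^ 2 * e₂ - e₁) * Real.cos t + (p ^ 2 * (e₂ ^ 2 + 1) - (e₁ ^ 2 + 1)) = 0) :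
    (e₁ = 0 ∧ e₂ = 0) ∨
      (p ^ 2 = e₁ / e₂ ∧ e₂ ≠ 0 ∧ (e₂ - e₁) * (e₁ * e₂ - 1) = 0) := by
  have h0 := h 0
  have h1 := h Real.pi
  rw [Real.cos_zero] at h0
  rw [Real.cos_pi] at h1
  have hA : p ^ 2 * e₂ = e₁ := by nlinarith
  have hB : p ^ 2 * (e₂ ^ 2 + 1) = e₁ ^ 2 + 1 := by nlinarith
  by_cases he : e₂ = 0
  · left
    constructor
    · rw [← hA, he]; ring
    · exact he
  · right
    refine ⟨?_, he, ?_⟩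
    · field_simp
      linarith [hA]
    · have hp2 : p ^ 2 = e₁ / e₂ := by field_simp; linarith [hA]
      rw [hp2] at hB
      field_simp at hB
      nlinarith [hB]
end

section
/- Let e₁, e₂ ≥ 0 and p ≠ 0 be real numbers. If p²·(e₂² + 2·e₂·cos t + 1) = e₁² + 2·e₁·cos t + 1 for all real t, then e₁ = e₂ or e₁·e₂ = 1. -/
theorem confocal_conics_equal_or_reciprocal
    (e₁ e₂ p : ℝ) (h₁ : 0 ≤ e₁) (h₂ : 0 ≤ e₂) (hp : p ≠ 0)
    (h : ∀ t : ℝ,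
      p ^ 2 * (e₂ ^ 2 + 2 * e₂ * Real.cos t + 1) = e₁ ^ 2 + 2 * e₁ * Real.cos t + 1) :
    e₁ = e₂ ∨ e₁ * e₂ = 1 := by
  have ha := h (Real.pi / 2)
  have hb := h 0
  rw [Real.cos_pi_div_two] at ha
  rw [Real.cos_zero] at hb
  have he : p ^ 2 * e₂ = e₁ := by nlinarith
  have key : (p ^ 2 - 1) * (p ^ 2 * e₂ ^ 2 - 1) = 0 := by nlinarith
  rcases mul_eq_zero.1 key with hk | hk
  · left
    have : p ^ 2 = 1 := by linarith
    rw [this, one_mul] at he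
    linarith
  · right
    have : e₁ * e₂ = p ^ 2 * e₂ ^ 2 := by rw [← he]; ring
    linarith
end

section
/- Let x(t) = (r(t)·cos t, r(t)·sin t) with r(t) = a/(1 + e·cos(t − δ)), a > 0, defined on an interval where 1 + e·cos(t − δ) > 0. Then the derivative x'(t) is a positive scalar multiple of the vector (−e·sin δ − sin t, e·cos δ + cos t). -/
/-! The velocity of a polar curve is `r' (cos t, sin t) + r (-sin t, cos t)`. For the conic,
`r' = a e sin (t - δ) / D²` and `r = a D / D²` with `D = 1 + e cos (t - δ)`; writing `δ = t - (t - δ)`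
in the subtraction formulas collapses the velocity to `(a / D²) (-e sin δ - sin t, e cos δ + cos t)`. -/

open Real

theorem hasDerivAt_polar {r : ℝ → ℝ} {r' t : ℝ} (hr : HasDerivAt r r' t) :
    HasDerivAt (fun s => (r s * cos s, r s * sin s))
      (r' * cos t - r t * sin t, r' * sin t + r t * cos t) t := by
  convert (hr.fun_mul (hasDerivAt_cos t)).prodMk (hr.fun_mul (hasDerivAt_sin t)) using 1
  ext <;> ring

theorem hasDerivAt_conic_radius (a e δ : ℝ) {t : ℝ} (hden : 1 + e * cos (t - δ) ≠ 0) :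
    HasDerivAt (fun s => a / (1 + e * cos (s - δ)))
      (a * e * sin (t - δ) / (1 + e * cos (t - δ)) ^ 2) t := by
  have hD := ((((hasDerivAt_id' t).sub_const δ).cos).const_mul e).const_add 1
  exact ((hasDerivAt_const t a).fun_div hD hden).congr_deriv (by ring)

theorem conic_polar_velocity (a e δ t : ℝ) (hden : 1 + e * cos (t - δ) ≠ 0) :
    let r := a / (1 + e * cos (t - δ))
    let r' := a * e * sin (t - δ) / (1 + e * cos (t - δ)) ^ 2
    (r' * cos t - r * sin t, r' * sin t + r * cos t) =
      (a / (1 + e * cos (t - δ)) ^ 2) • (-e * sin δ - sin t, e * cos δ + cos t) := by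
  have hsin : sin δ = sin t * cos (t - δ) - cos t * sin (t - δ) := by
    rw [← sin_sub, sub_sub_cancel]
  have hcos : cos δ = cos t * cos (t - δ) + sin t * sin (t - δ) := by
    rw [← cos_sub, sub_sub_cancel]
  ext <;> simp only [Prod.smul_fst, Prod.smul_snd, smul_eq_mul]
  · rw [hsin]; field_simp; ring
  · rw [hcos]; field_simp; ring

theorem polar_conic_tangent_direction
    (a e δ : ℝ) (ha : 0 < a) (t : ℝ)
    (hden : 0 < 1 + e * Real.cos (t - δ)) :
    ∃ c : ℝ, 0 < c ∧
      HasDerivAt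
        (fun s : ℝ =>
          ((a / (1 + e * Real.cos (s - δ))) * Real.cos s,
           (a / (1 + e * Real.cos (s - δ))) * Real.sin s))
        (c • (-e * Real.sin δ - Real.sin t, e * Real.cos δ + Real.cos t)) t := by
  refine ⟨a / (1 + e * cos (t - δ)) ^ 2, by positivity, ?_⟩
  rw [← conic_polar_velocity a e δ t hden.ne']
  exact hasDerivAt_polar (hasDerivAt_conic_radius a e δ hden.ne')
end

section
/- Let a₁, a₂, δ₁, δ₂, p be real numbers with a₁ ≠ 0, a₂ ≠ 0, and p ≠ 0. If for all real t, −p·a₁/√(4·a₁²·(t + δ₁)² + 1) = a₂/√(4·a₂²·(t + δ₂)² + 1), then δ₁ = δ₂, p² = 1, and p·a₁ = −a₂ (so either p = 1 and a₂ = −a₁, or p = −1 and a₂ = a₁). -/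
theorem parabola_parabola_compatibility
    (a₁ a₂ δ₁ δ₂ p : ℝ) (ha₁ : a₁ ≠ 0) (ha₂ : a₂ ≠ 0) (hp : p ≠ 0)
    (h : ∀ t : ℝ,
      -p * a₁ / Real.sqrt (4 * a₁ ^ 2 * (t + δ₁) ^ 2 + 1) =
        a₂ / Real.sqrt (4 * a₂ ^ 2 * (t + δ₂) ^ 2 + 1)) :
    δ₁ = δ₂ ∧ p ^ 2 = 1 ∧ p * a₁ = -a₂ := by
  have key : ∀ t : ℝ,
      p ^ 2 * a₁ ^ 2 * (4 * a₂ ^ 2 * (t + δ₂) ^ 2 + 1) =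
        a₂ ^ 2 * (4 * a₁ ^ 2 * (t + δ₁) ^ 2 + 1) := by
    intro t
    have h1 : (0:ℝ) < 4 * a₁ ^ 2 * (t + δ₁) ^ 2 + 1 := by positivity
    have h2 : (0:ℝ) < 4 * a₂ ^ 2 * (t + δ₂) ^ 2 + 1 := by positivity
    have hs1 : 0 < Real.sqrt (4 * a₁ ^ 2 * (t + δ₁) ^ 2 + 1) := Real.sqrt_pos.2 h1
    have hs2 : 0 < Real.sqrt (4 * a₂ ^ 2 * (t + δ₂) ^ 2 + 1) := Real.sqrt_pos.2 h2
    have s1 := Real.sq_sqrt h1.le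
    have s2 := Real.sq_sqrt h2.le
    have ht := h t
    rw [div_eq_div_iff hs1.ne' hs2.ne'] at ht
    have hsq : (-p * a₁ * Real.sqrt (4 * a₂ ^ 2 * (t + δ₂) ^ 2 + 1)) ^ 2 =
        (a₂ * Real.sqrt (4 * a₁ ^ 2 * (t + δ₁) ^ 2 + 1)) ^ 2 := by rw [ht]
    linear_combination hsq - p ^ 2 * a₁ ^ 2 * s2 + a₂ ^ 2 * s1
  have hne : (a₁ ^ 2 * a₂ ^ 2 : ℝ) ≠ 0 := by positivity
  have hp2 : p ^ 2 = 1 := by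
    have e : p ^ 2 * (a₁ ^ 2 * a₂ ^ 2) = 1 * (a₁ ^ 2 * a₂ ^ 2) := by
      linear_combination (1/8) * (key 1 + key (-1) - 2 * key 0)
    exact mul_right_cancel₀ hne e
  have hδ : δ₁ = δ₂ := by
    have e : (a₁ ^ 2 * a₂ ^ 2) * δ₂ = (a₁ ^ 2 * a₂ ^ 2) * δ₁ := by
      linear_combination (1/16) * (key 1 - key (-1)) - a₁ ^ 2 * a₂ ^ 2 * δ₂ * hp2
    exact (mul_left_cancel₀ hne e).symm
  have hsign : p * a₁ = -a₂ := by
    have ht := h (-δ₁)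
    rw [hδ] at ht
    simp at ht
    linarith
  exact ⟨hδ, hp2, hsign⟩
end

section
/- Let e₁ = −e and e₂ = −1/e with 0 < e < 1. Then for all t, e²·(e₂² + 2·e₂·cos t + 1) = e₁² + 2·e₁·cos t + 1, i.e., e²·(1/e² − (2/e)·cos t + 1) = e² − 2·e·cos t + 1. Hence the speed coefficient p = e (positive) satisfies the compatibility equation p²·(e₂² + 2·e₂·cos t + 1) = e₁² + 2·e₁·cos t + 1, so the two creases fold with fold angles of the same sign. -/
theorem ellipse_hyperbola_case3
    (e : ℝ) (he0 : 0 < e) (he1 : e < 1) :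
    (∀ t : ℝ,
      e ^ 2 * ((-(1 / e)) ^ 2 + 2 * (-(1 / e)) * Real.cos t + 1) =
        (-e) ^ 2 + 2 * (-e) * Real.cos t + 1) ∧
    (∀ t : ℝ,
      e ^ 2 * (1 / e ^ 2 - (2 / e) * Real.cos t + 1) =
        e ^ 2 - 2 * e * Real.cos t + 1) := by
  have hne : e ≠ 0 := ne_of_gt he0
  constructor <;> intro t <;> field_simp <;> ring
end
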